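/- arXiv:2407.05972 — 4 statements merged into one kernel-verified Lean document; each statement's English description precedes it below -/
import Mathlib

section
/- Genuine nonlinearity: Define λ₁(σ,β) = 1/(β−σ) on {(σ,β) ∈ ℝ² : β ≠ σ} and λ₂(σ,β) = 1/(β+σ) on {(σ,β) ∈ ℝ² : β ≠ −σ}, and let r₁ = (1/√2)·(1,−1), r₂ = (1/√2)·(1,1) ∈ ℝ². Then for every (σ,β) with β ≠ σ, the derivative of λ₁ at (σ,β) in the direction r₁ (i.e. ∇λ₁(σ,β)·r₁) equals √2/(β−σ)², which is nonzero; and for every (σ,β) with β ≠ −σ, the derivative of λ₂ at (σ,β) in the direction r₂ equals −√2/(β+σ)², which is nonzero. -/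
noncomputable section

/-- The first characteristic speed `λ₁(σ,β) = 1/(β − σ)`. -/
def lambda1 (p : ℝ × ℝ) : ℝ := 1 / (p.2 - p.1)

/-- The second characteristic speed `λ₂(σ,β) = 1/(β + σ)`. -/
def lambda2 (p : ℝ × ℝ) : ℝ := 1 / (p.2 + p.1)

/-- The first unit right eigenvector `r₁ = (1/√2)·(1,−1)`. -/
def r1 : ℝ × ℝ := (Real.sqrt 2)⁻¹ • ((1 : ℝ), (-1 : ℝ))

/-- The second unit right eigenvector `r₂ = (1/√2)·(1,1)`. -/
def r2 : ℝ × ℝ := (Real.sqrt 2)⁻¹ • ((1 : ℝ), (1 : ℝ))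

/-! Both speeds are reciprocals of linear functionals, `λ₁ = 1/(β − σ)` and `λ₂ = 1/(β + σ)`, and
the derivative of `1/L` in the direction `v` is `−L v / L²`; it remains to evaluate
`r₁.2 − r₁.1 = −√2` and `r₂.2 + r₂.1 = √2`. -/

open ContinuousLinearMap

theorem fderiv_one_div_clm_apply {𝕜 E : Type*} [NontriviallyNormedField 𝕜] [NormedAddCommGroup E]
    [NormedSpace 𝕜 E] (L : E →L[𝕜] 𝕜) {x : E} (hx : L x ≠ 0) (v : E) :
    fderiv 𝕜 (fun p => 1 / L p) x v = -L v / L x ^ 2 := by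
  have h : HasFDerivAt (fun p => (L p)⁻¹) _ x := (hasFDerivAt_inv hx).comp x L.hasFDerivAt
  simp only [one_div, h.fderiv]
  simp [div_eq_mul_inv]

theorem r1_snd_sub_fst : r1.2 - r1.1 = -Real.sqrt 2 := by
  simp only [r1, Prod.smul_mk, smul_eq_mul, mul_one, mul_neg]
  rw [sub_eq_add_neg, ← neg_add, ← two_mul, ← div_eq_mul_inv, Real.div_sqrt]

theorem r2_snd_add_fst : r2.2 + r2.1 = Real.sqrt 2 := by
  simp only [r2, Prod.smul_mk, smul_eq_mul, mul_one]
  rw [← two_mul, ← div_eq_mul_inv, Real.div_sqrt]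

/-- **Genuine nonlinearity** (Lemma 4.2): the directional derivatives `∇λⱼ · rⱼ` are
given by `√2/(β−σ)²` and `−√2/(β+σ)²` respectively, and never vanish. -/
theorem genuine_nonlinearity :
    (∀ σ β : ℝ, β ≠ σ →
      fderiv ℝ lambda1 (σ, β) r1 = Real.sqrt 2 / (β - σ)^2 ∧
      Real.sqrt 2 / (β - σ)^2 ≠ 0) ∧
    (∀ σ β : ℝ, β ≠ -σ →
      fderiv ℝ lambda2 (σ, β) r2 = -(Real.sqrt 2 / (β + σ)^2) ∧
      -(Real.sqrt 2 / (β + σ)^2) ≠ 0) := by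
  constructor
  · intro σ β h
    have hne : β - σ ≠ 0 := sub_ne_zero.mpr h
    refine ⟨?_, by positivity⟩
    change fderiv ℝ (fun p => 1 / (snd ℝ ℝ ℝ - fst ℝ ℝ ℝ) p) (σ, β) r1 = _
    rw [fderiv_one_div_clm_apply _ hne]
    simp [r1_snd_sub_fst]
  · intro σ β h
    have hne : β + σ ≠ 0 := fun h' => h (eq_neg_of_add_eq_zero_left h')
    refine ⟨?_, neg_ne_zero.mpr (by positivity)⟩
    change fderiv ℝ (fun p => 1 / (snd ℝ ℝ ℝ + fst ℝ ℝ ℝ) p) (σ, β) r2 = _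
    rw [fderiv_one_div_clm_apply _ hne]
    simp [r2_snd_add_fst, neg_div]
end
end

section
/- The system is in conservative form only for γ = 3: Let γ > 0 be a real number. The following are equivalent: (i) γ = 3; (ii) for every (σ,β) ∈ ℝ² with σ > 0 and β² ≠ σ^{γ−1} (powers of σ taken as real powers), both symmetry conditions for the closedness of the rows of the matrix field (β² − σ^{γ−1})⁻¹·[[β, −σ], [−σ^{γ−2}, β]] hold, namely ∂_β [ β/(β² − σ^{γ−1}) ] = ∂_σ [ −σ/(β² − σ^{γ−1}) ] and ∂_β [ −σ^{γ−2}/(β² − σ^{γ−1}) ] = ∂_σ [ β/(β² − σ^{γ−1}) ]. -/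
/-!
The mixed partials of the first row differ by `(γ - 3) σ^(γ-1) / (β² - σ^(γ-1))²`, and
`σ^(γ-1) > 0`, so the first row alone is closed exactly when `γ = 3` (it suffices to test the
point `(σ, β) = (1, 0)`). For `γ = 3` both mixed partials of the second row equal
`2βσ / (β² - σ²)²`.
-/

theorem hasDerivAt_div_sq_sub {A β : ℝ} (h : β ^ 2 ≠ A) :
    HasDerivAt (fun b : ℝ => b / (b ^ 2 - A)) ((-β ^ 2 - A) / (β ^ 2 - A) ^ 2) β := by
  have hden : HasDerivAt (fun b : ℝ => b ^ 2 - A) (2 * β) β := by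
    simpa using (hasDerivAt_pow 2 β).sub_const A
  refine ((hasDerivAt_id β).div hden (sub_ne_zero.mpr h)).congr_deriv ?_
  simp only [id_eq]
  ring

theorem hasDerivAt_const_div_sq_sub {A β : ℝ} (c : ℝ) (h : β ^ 2 ≠ A) :
    HasDerivAt (fun b : ℝ => c / (b ^ 2 - A)) (-(2 * β * c) / (β ^ 2 - A) ^ 2) β := by
  have hden : HasDerivAt (fun b : ℝ => b ^ 2 - A) (2 * β) β := by
    simpa using (hasDerivAt_pow 2 β).sub_const A
  refine ((hasDerivAt_const β c).div hden (sub_ne_zero.mpr h)).congr_deriv ?_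
  ring

theorem hasDerivAt_const_sub_rpow (B : ℝ) {p σ : ℝ} (hσ : σ ≠ 0) :
    HasDerivAt (fun s : ℝ => B - s ^ p) (-(p * σ ^ (p - 1))) σ :=
  (Real.hasDerivAt_rpow_const (Or.inl hσ)).const_sub B

theorem hasDerivAt_neg_div_sub_rpow {B p σ : ℝ} (hσ : σ ≠ 0) (h : B ≠ σ ^ p) :
    HasDerivAt (fun s : ℝ => -s / (B - s ^ p))
      ((-(B - σ ^ p) - p * σ ^ p) / (B - σ ^ p) ^ 2) σ := by
  refine ((hasDerivAt_id σ).neg.div (hasDerivAt_const_sub_rpow B hσ)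
    (sub_ne_zero.mpr h)).congr_deriv ?_
  rw [Real.rpow_sub_one hσ, Pi.neg_apply, id_eq]
  field_simp

theorem hasDerivAt_const_div_sub_rpow {B p σ : ℝ} (c : ℝ) (hσ : σ ≠ 0) (h : B ≠ σ ^ p) :
    HasDerivAt (fun s : ℝ => c / (B - s ^ p))
      (c * (p * σ ^ (p - 1)) / (B - σ ^ p) ^ 2) σ := by
  refine ((hasDerivAt_const σ c).div (hasDerivAt_const_sub_rpow B hσ)
    (sub_ne_zero.mpr h)).congr_deriv ?_
  ring

section CarrollianFlux

variable {γ σ β : ℝ}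

theorem firstRow_closed_iff (hσ : 0 < σ) (h : β ^ 2 ≠ σ ^ (γ - 1)) :
    deriv (fun b : ℝ => b / (b ^ 2 - σ ^ (γ - 1))) β
        = deriv (fun s : ℝ => -s / (β ^ 2 - s ^ (γ - 1))) σ ↔ γ = 3 := by
  have hD : (β ^ 2 - σ ^ (γ - 1)) ^ 2 ≠ 0 := pow_ne_zero 2 (sub_ne_zero.mpr h)
  have hA : 0 < σ ^ (γ - 1) := Real.rpow_pos_of_pos hσ _
  rw [(hasDerivAt_div_sq_sub h).deriv, (hasDerivAt_neg_div_sub_rpow hσ.ne' h).deriv,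
    div_left_inj' hD]
  constructor
  · intro heq
    have : (γ - 3) * σ ^ (γ - 1) = 0 := by linarith
    linarith [(mul_eq_zero.mp this).resolve_right hA.ne']
  · rintro rfl
    ring

theorem secondRow_closed_of_eq_three (hσ : 0 < σ) (h : β ^ 2 ≠ σ ^ ((3 : ℝ) - 1)) :
    deriv (fun b : ℝ => -(σ ^ ((3 : ℝ) - 2)) / (b ^ 2 - σ ^ ((3 : ℝ) - 1))) β
        = deriv (fun s : ℝ => β / (β ^ 2 - s ^ ((3 : ℝ) - 1))) σ := by
  rw [(hasDerivAt_const_div_sq_sub _ h).deriv,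
    (hasDerivAt_const_div_sub_rpow β hσ.ne' h).deriv,
    show (3 : ℝ) - 1 - 1 = 3 - 2 by norm_num]
  ring

end CarrollianFlux

theorem conservative_iff_gamma_eq_three_general (γ : ℝ) :
    γ = 3 ↔
      ∀ σ β : ℝ, 0 < σ → β^2 ≠ σ ^ (γ - 1) →
        (deriv (fun b : ℝ => b / (b^2 - σ ^ (γ - 1))) β
            = deriv (fun s : ℝ => -s / (β^2 - s ^ (γ - 1))) σ) ∧
        (deriv (fun b : ℝ => -(σ ^ (γ - 2)) / (b^2 - σ ^ (γ - 1))) β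
            = deriv (fun s : ℝ => β / (β^2 - s ^ (γ - 1))) σ) := by
  constructor
  · rintro rfl σ β hσ h
    exact ⟨(firstRow_closed_iff hσ h).mpr rfl, secondRow_closed_of_eq_three hσ h⟩
  · intro hclosed
    have h : (0 : ℝ) ^ 2 ≠ 1 ^ (γ - 1) := by simp
    exact (firstRow_closed_iff one_pos h).mp (hclosed 1 0 one_pos h).1

/-- **The system is in conservative form only for γ = 3** (§2.2): for `γ > 0`, the matrix
field `(β² − σ^{γ−1})⁻¹·[[β, −σ], [−σ^{γ−2}, β]]` has closed rows (equality of the mixed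
partial derivatives of the would-be flux) at every admissible point if and only if `γ = 3`.
Powers of `σ` are real powers, well defined since `σ > 0`. -/
theorem conservative_iff_gamma_eq_three (γ : ℝ) (hγ : 0 < γ) :
    γ = 3 ↔
      ∀ σ β : ℝ, 0 < σ → β^2 ≠ σ ^ (γ - 1) →
        (deriv (fun b : ℝ => b / (b^2 - σ ^ (γ - 1))) β
            = deriv (fun s : ℝ => -s / (β^2 - s ^ (γ - 1))) σ) ∧
        (deriv (fun b : ℝ => -(σ ^ (γ - 2)) / (b^2 - σ ^ (γ - 1))) β
            = deriv (fun s : ℝ => β / (β^2 - s ^ (γ - 1))) σ) :=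
  conservative_iff_gamma_eq_three_general γ
end

section
/- The entropy equation: Let V ⊆ ℝ² be an open set such that every (σ,β) ∈ V satisfies σ ≠ 0, β ≠ σ and β ≠ −σ. Let η, q : V → ℝ be C² functions satisfying, at every point of V, ∂_σ q = (β ∂_σ η − σ ∂_β η)/(β² − σ²) and ∂_β q = (β ∂_β η − σ ∂_σ η)/(β² − σ²). Then ∂²η/∂σ² = ∂²η/∂β² at every point of V, i.e. η solves the linear wave equation η_{σσ} − η_{ββ} = 0 on V. -/
/-!
Since `q` is `C²`, its mixed partials agree: `q_σβ = q_βσ`. Differentiating the two flux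
relations by the quotient rule and using `η_σβ = η_βσ`, the difference `q_σβ - q_βσ` collapses
to `σ (η_σσ - η_ββ) / (β² - σ²)`, which therefore vanishes; as `σ ≠ 0`, `η_σσ = η_ββ`.
-/

noncomputable section

open Function Filter ContinuousLinearMap Set Topology

section PartialDerivatives

variable {E : Type*} [NormedAddCommGroup E] [NormedSpace ℝ E]

def partialFst (f : ℝ → ℝ → E) (s b : ℝ) : E := deriv (fun s' => f s' b) s

def partialSnd (f : ℝ → ℝ → E) (s b : ℝ) : E := deriv (fun b' => f s b') b

variable {f : ℝ → ℝ → E}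

theorem hasDerivAt_slice_fst {L : ℝ × ℝ →L[ℝ] E} {s b : ℝ}
    (h : HasFDerivAt (uncurry f) L (s, b)) : HasDerivAt (fun s' => f s' b) (L (1, 0)) s :=
  (h.comp_hasDerivAt s ((hasDerivAt_id s).prodMk (hasDerivAt_const s b)) :)

theorem hasDerivAt_slice_snd {L : ℝ × ℝ →L[ℝ] E} {s b : ℝ}
    (h : HasFDerivAt (uncurry f) L (s, b)) : HasDerivAt (fun b' => f s b') (L (0, 1)) b :=
  (h.comp_hasDerivAt b ((hasDerivAt_const b s).prodMk (hasDerivAt_id b)) :)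

theorem DifferentiableAt.hasDerivAt_partialFst {s b : ℝ}
    (h : DifferentiableAt ℝ (uncurry f) (s, b)) :
    HasDerivAt (fun s' => f s' b) (partialFst f s b) s :=
  (hasDerivAt_slice_fst h.hasFDerivAt).differentiableAt.hasDerivAt

theorem DifferentiableAt.hasDerivAt_partialSnd {s b : ℝ}
    (h : DifferentiableAt ℝ (uncurry f) (s, b)) :
    HasDerivAt (fun b' => f s b') (partialSnd f s b) b :=
  (hasDerivAt_slice_snd h.hasFDerivAt).differentiableAt.hasDerivAt

theorem hasFDerivAt_fderiv_apply {F : Type*} [NormedAddCommGroup F] [NormedSpace ℝ F]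
    {g : F → E} {x : F} (hg : ContDiffAt ℝ 2 g x) (v : F) :
    HasFDerivAt (fun y => fderiv ℝ g y v) ((apply ℝ E v).comp (fderiv ℝ (fderiv ℝ g) x)) x :=
  (apply ℝ E v).hasFDerivAt.comp x
    ((hg.fderiv_right (m := 1) (by norm_num)).differentiableAt one_ne_zero).hasFDerivAt

variable {V : Set (ℝ × ℝ)}

theorem eqOn_uncurry_partialFst (hV : IsOpen V) (hf : DifferentiableOn ℝ (uncurry f) V) :
    EqOn (uncurry (partialFst f)) (fun p => fderiv ℝ (uncurry f) p (1, 0)) V := fun p hp =>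
  (hasDerivAt_slice_fst ((hf p hp).differentiableAt (hV.mem_nhds hp)).hasFDerivAt).deriv

theorem eqOn_uncurry_partialSnd (hV : IsOpen V) (hf : DifferentiableOn ℝ (uncurry f) V) :
    EqOn (uncurry (partialSnd f)) (fun p => fderiv ℝ (uncurry f) p (0, 1)) V := fun p hp =>
  (hasDerivAt_slice_snd ((hf p hp).differentiableAt (hV.mem_nhds hp)).hasFDerivAt).deriv

theorem hasFDerivAt_uncurry_partialFst (hV : IsOpen V) (hf : ContDiffOn ℝ 2 (uncurry f) V)
    {p : ℝ × ℝ} (hp : p ∈ V) :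
    HasFDerivAt (uncurry (partialFst f))
      ((apply ℝ E (1, 0)).comp (fderiv ℝ (fderiv ℝ (uncurry f)) p)) p :=
  (hasFDerivAt_fderiv_apply (hf.contDiffAt (hV.mem_nhds hp)) _).congr_of_eventuallyEq <|
    eventually_of_mem (hV.mem_nhds hp) (eqOn_uncurry_partialFst hV (hf.differentiableOn two_ne_zero))

theorem hasFDerivAt_uncurry_partialSnd (hV : IsOpen V) (hf : ContDiffOn ℝ 2 (uncurry f) V)
    {p : ℝ × ℝ} (hp : p ∈ V) :
    HasFDerivAt (uncurry (partialSnd f))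
      ((apply ℝ E (0, 1)).comp (fderiv ℝ (fderiv ℝ (uncurry f)) p)) p :=
  (hasFDerivAt_fderiv_apply (hf.contDiffAt (hV.mem_nhds hp)) _).congr_of_eventuallyEq <|
    eventually_of_mem (hV.mem_nhds hp) (eqOn_uncurry_partialSnd hV (hf.differentiableOn two_ne_zero))

theorem partialSnd_partialFst_eq (hV : IsOpen V) (hf : ContDiffOn ℝ 2 (uncurry f) V) {s b : ℝ}
    (hp : (s, b) ∈ V) :
    partialSnd (partialFst f) s b = partialFst (partialSnd f) s b := by
  change deriv (fun b' => partialFst f s b') b = deriv (fun s' => partialSnd f s' b) s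
  rw [(hasDerivAt_slice_snd (hasFDerivAt_uncurry_partialFst hV hf hp)).deriv,
    (hasDerivAt_slice_fst (hasFDerivAt_uncurry_partialSnd hV hf hp)).deriv]
  exact (hf.contDiffAt (hV.mem_nhds hp)).isSymmSndFDerivAt (by simp) _ _

end PartialDerivatives

section EntropyFlux

variable {u v : ℝ → ℝ} {u' v' s b : ℝ}

theorem hasDerivAt_fluxFst_snd (hu : HasDerivAt u u' b) (hv : HasDerivAt v v' b)
    (hD : b ^ 2 - s ^ 2 ≠ 0) :
    HasDerivAt (fun b' => (b' * u b' - s * v b') / (b' ^ 2 - s ^ 2))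
      (((u b + b * u' - s * v') * (b ^ 2 - s ^ 2) - (b * u b - s * v b) * (2 * b))
        / (b ^ 2 - s ^ 2) ^ 2) b :=
  ((((hasDerivAt_id' b).mul hu).sub (hv.const_mul s)).div
    ((hasDerivAt_pow 2 b).sub_const _) hD).congr_deriv (by norm_num)

theorem hasDerivAt_fluxSnd_fst (hu : HasDerivAt u u' s) (hv : HasDerivAt v v' s)
    (hD : b ^ 2 - s ^ 2 ≠ 0) :
    HasDerivAt (fun s' => (b * v s' - s' * u s') / (b ^ 2 - s' ^ 2))
      (((b * v' - (u s + s * u')) * (b ^ 2 - s ^ 2) - (b * v s - s * u s) * (-(2 * s)))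
        / (b ^ 2 - s ^ 2) ^ 2) s :=
  (((hv.const_mul b).sub ((hasDerivAt_id' s).mul hu)).div
    ((hasDerivAt_pow 2 s).const_sub _) hD).congr_deriv (by norm_num)

end EntropyFlux

theorem eq_of_flux_mixed_partials {s b P Q Pσ Pβ Qσ Qβ : ℝ} (hs : s ≠ 0)
    (hD : b ^ 2 - s ^ 2 ≠ 0) (hP : Pβ = Qσ)
    (hq : ((P + b * Pβ - s * Qβ) * (b ^ 2 - s ^ 2) - (b * P - s * Q) * (2 * b))
        / (b ^ 2 - s ^ 2) ^ 2
      = ((b * Qσ - (P + s * Pσ)) * (b ^ 2 - s ^ 2) - (b * Q - s * P) * (-(2 * s)))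
        / (b ^ 2 - s ^ 2) ^ 2) :
    Pσ = Qβ := by
  rw [div_left_inj' (pow_ne_zero 2 hD)] at hq
  have h : s * (b ^ 2 - s ^ 2) * (Pσ - Qβ) = 0 := by
    linear_combination hq - b * (b ^ 2 - s ^ 2) * hP
  exact sub_eq_zero.1 ((mul_eq_zero.1 h).resolve_left (mul_ne_zero hs hD))

/-- **The entropy equation** (eq. (5.2)): if `(η,q)` are C² on an open set `V` avoiding
`σ = 0` and `β = ±σ`, and satisfy the entropy-pair gradient relations on `V`, then `η`
solves the linear wave equation `η_σσ − η_ββ = 0` on `V`. -/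
theorem entropy_wave_equation
    (V : Set (ℝ × ℝ)) (hV : IsOpen V)
    (hVgood : ∀ p ∈ V, p.1 ≠ 0 ∧ p.2 ≠ p.1 ∧ p.2 ≠ -p.1)
    (η q : ℝ → ℝ → ℝ)
    (hη : ContDiffOn ℝ 2 (fun p : ℝ × ℝ => η p.1 p.2) V)
    (hq : ContDiffOn ℝ 2 (fun p : ℝ × ℝ => q p.1 p.2) V)
    (hgrad1 : ∀ s b : ℝ, (s, b) ∈ V →
      deriv (fun s' => q s' b) s
        = (b * deriv (fun s' => η s' b) s - s * deriv (fun b' => η s b') b) / (b^2 - s^2))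
    (hgrad2 : ∀ s b : ℝ, (s, b) ∈ V →
      deriv (fun b' => q s b') b
        = (b * deriv (fun b' => η s b') b - s * deriv (fun s' => η s' b) s) / (b^2 - s^2)) :
    ∀ s b : ℝ, (s, b) ∈ V →
      deriv (fun s' => deriv (fun s'' => η s'' b) s') s
        = deriv (fun b' => deriv (fun b'' => η s b'') b') b := by
  intro s b hp
  obtain ⟨hs, hbs, hbs'⟩ := hVgood _ hp
  have hD : b ^ 2 - s ^ 2 ≠ 0 := by
    rw [sq_sub_sq]
    exact mul_ne_zero (mt add_eq_zero_iff_eq_neg.1 hbs') (sub_ne_zero.2 hbs)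
  have hVfst : ∀ᶠ s' in 𝓝 s, (s', b) ∈ V :=
    (continuous_id.prodMk continuous_const).continuousAt.preimage_mem_nhds (hV.mem_nhds hp)
  have hVsnd : ∀ᶠ b' in 𝓝 b, (s, b') ∈ V :=
    (continuous_const.prodMk continuous_id).continuousAt.preimage_mem_nhds (hV.mem_nhds hp)
  have hηFst := (hasFDerivAt_uncurry_partialFst hV hη hp).differentiableAt
  have hηSnd := (hasFDerivAt_uncurry_partialSnd hV hη hp).differentiableAt
  have hqFstSnd := (hasDerivAt_fluxFst_snd hηFst.hasDerivAt_partialSnd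
    hηSnd.hasDerivAt_partialSnd hD).congr_of_eventuallyEq (hVsnd.mono fun b' => hgrad1 s b')
  have hqSndFst := (hasDerivAt_fluxSnd_fst hηFst.hasDerivAt_partialFst
    hηSnd.hasDerivAt_partialFst hD).congr_of_eventuallyEq (hVfst.mono fun s' => hgrad2 s' b)
  exact eq_of_flux_mixed_partials hs hD (partialSnd_partialFst_eq hV hη hp)
    (hqFstSnd.deriv.symm.trans ((partialSnd_partialFst_eq hV hq hp).trans hqSndFst.deriv))
end
end

section
/- Isentropic reduction of the full Carrollian system: Let γ > 1 be a real number, let V ⊆ ℝ² be open (coordinates (t,x)), and let σ, β : V → ℝ be continuously differentiable with σ > 0 on V, satisfying pointwise on V the two isentropic Carrollian equations ∂_t(βσ) + ∂_x σ = 0 and ∂_t( σ^γ/γ + β²σ ) + ∂_x(βσ) = 0 (real powers of σ). Define ϖ = (1/2)σβ² + σ^γ/(γ(γ−1)) and e = σ^γ/γ on V. Then the third Carrollian equation holds pointwise on V: ∂_t(βϖ) + ∂_x ϖ = −∂_t(β e). -/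
/-!
Write `E₁, E₂, E₃` for the differences of the two sides of the three Carrollian equations. By the
chain rule, at every point `E₃ = (σ^(γ-1)/(γ-1) - β²/2) • E₁ + β • E₂`, so `E₃` vanishes wherever
`E₁` and `E₂` do.
-/

theorem DifferentiableAt.comp_prodMk_slices {𝕜 E F G : Type*} [NontriviallyNormedField 𝕜]
    [NormedAddCommGroup E] [NormedSpace 𝕜 E] [NormedAddCommGroup F] [NormedSpace 𝕜 F]
    [NormedAddCommGroup G] [NormedSpace 𝕜 G] {f : E × F → G} {a : E} {b : F}
    (hf : DifferentiableAt 𝕜 f (a, b)) :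
    DifferentiableAt 𝕜 (fun a' => f (a', b)) a ∧ DifferentiableAt 𝕜 (fun b' => f (a, b')) b :=
  ⟨hf.comp a (differentiableAt_id.prodMk (differentiableAt_const b)),
    hf.comp b ((differentiableAt_const a).prodMk differentiableAt_id)⟩

namespace Carrollian

variable {γ : ℝ} {s b u v : ℝ → ℝ} {s' b' u' v' y t x : ℝ}

lemma rpow_eq_rpow_sub_one_mul (x : ℝ) (hγ : γ ≠ 0) : x ^ γ = x ^ (γ - 1) * x := by
  rcases eq_or_ne x 0 with rfl | hx
  · simp [Real.zero_rpow hγ]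
  · rw [← Real.rpow_add_one hx, sub_add_cancel]

lemma hasDerivAt_internalEnergy (hγ : 1 < γ) (hs : HasDerivAt s s' y) :
    HasDerivAt (fun y => s y ^ γ / γ) (s' * s y ^ (γ - 1)) y :=
  ((hs.rpow_const (Or.inr hγ.le)).div_const γ).congr_deriv (by field_simp)

lemma hasDerivAt_pressure (hγ : 1 < γ) (hs : HasDerivAt s s' y) (hb : HasDerivAt b b' y) :
    HasDerivAt (fun y => 1 / 2 * s y * b y ^ 2 + s y ^ γ / (γ * (γ - 1)))
      (s' * (b y ^ 2 / 2 + s y ^ (γ - 1) / (γ - 1)) + s y * b y * b') y := by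
  have hγ₀ : γ ≠ 0 := by positivity
  have hγ₁ : γ - 1 ≠ 0 := sub_ne_zero.2 hγ.ne'
  refine (((hs.const_mul (1 / 2)).fun_mul (hb.fun_pow 2)).fun_add
    ((hs.rpow_const (Or.inr hγ.le)).div_const (γ * (γ - 1)))).congr_deriv ?_
  field_simp
  ring

/-- The reduction at a single point `(t, x)`: `s, b` are the `t`-slices and `u, v` the
`x`-slices of `σ, β` through that point. -/
theorem third_equation_of_slices (hγ : 1 < γ)
    (hs : HasDerivAt s s' t) (hb : HasDerivAt b b' t)
    (hu : HasDerivAt u u' x) (hv : HasDerivAt v v' x)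
    (hus : u x = s t) (hvb : v x = b t)
    (h₁ : deriv (fun t' => b t' * s t') t + deriv u x = 0)
    (h₂ : deriv (fun t' => s t' ^ γ / γ + b t' ^ 2 * s t') t
      + deriv (fun x' => v x' * u x') x = 0) :
    deriv (fun t' => b t' * (1 / 2 * s t' * b t' ^ 2 + s t' ^ γ / (γ * (γ - 1)))) t
      + deriv (fun x' => 1 / 2 * u x' * v x' ^ 2 + u x' ^ γ / (γ * (γ - 1))) x
      = - deriv (fun t' => b t' * (s t' ^ γ / γ)) t := by
  have hγ₀ : γ ≠ 0 := by positivity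
  have hγ₁ : γ - 1 ≠ 0 := sub_ne_zero.2 hγ.ne'
  rw [(hb.fun_mul hs).deriv, hu.deriv] at h₁
  rw [((hasDerivAt_internalEnergy hγ hs).fun_add ((hb.fun_pow 2).fun_mul hs)).deriv,
    (hv.fun_mul hu).deriv, hus, hvb] at h₂
  rw [(hb.fun_mul (hasDerivAt_pressure hγ hs hb)).deriv, (hasDerivAt_pressure hγ hu hv).deriv,
    (hb.fun_mul (hasDerivAt_internalEnergy hγ hs)).deriv, hus, hvb,
    rpow_eq_rpow_sub_one_mul (s t) hγ₀]
  linear_combination (norm := (field_simp; ring))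
    (s t ^ (γ - 1) / (γ - 1) - b t ^ 2 / 2) * h₁ + b t * h₂

end Carrollian

open Carrollian in
theorem isentropic_reduction_general
    (γ : ℝ) (hγ : 1 < γ) (V : Set (ℝ × ℝ)) (hV : IsOpen V)
    (σ β : ℝ → ℝ → ℝ)
    (hσ : ContDiffOn ℝ 1 (fun p : ℝ × ℝ => σ p.1 p.2) V)
    (hβ : ContDiffOn ℝ 1 (fun p : ℝ × ℝ => β p.1 p.2) V)
    (heq1 : ∀ t x : ℝ, (t, x) ∈ V →
      deriv (fun t' => β t' x * σ t' x) t + deriv (fun x' => σ t x') x = 0)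
    (heq2 : ∀ t x : ℝ, (t, x) ∈ V →
      deriv (fun t' => (σ t' x) ^ γ / γ + (β t' x)^2 * σ t' x) t
          + deriv (fun x' => β t x' * σ t x') x = 0) :
    ∀ t x : ℝ, (t, x) ∈ V →
      deriv (fun t' => β t' x *
          ((1/2) * σ t' x * (β t' x)^2 + (σ t' x) ^ γ / (γ * (γ - 1)))) t
        + deriv (fun x' =>
            (1/2) * σ t x' * (β t x')^2 + (σ t x') ^ γ / (γ * (γ - 1))) x
      = - deriv (fun t' => β t' x * ((σ t' x) ^ γ / γ)) t := by
  intro t x hp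
  obtain ⟨hσt, hσx⟩ :=
    ((hσ.contDiffAt (hV.mem_nhds hp)).differentiableAt one_ne_zero).comp_prodMk_slices
  obtain ⟨hβt, hβx⟩ :=
    ((hβ.contDiffAt (hV.mem_nhds hp)).differentiableAt one_ne_zero).comp_prodMk_slices
  exact third_equation_of_slices hγ hσt.hasDerivAt hβt.hasDerivAt hσx.hasDerivAt hβx.hasDerivAt
    rfl rfl (heq1 t x hp) (heq2 t x hp)

/-- **Isentropic reduction of the full Carrollian system** (§1): if `γ > 1` and
`(σ,β)` is a C¹ solution with `σ > 0` of the two isentropic Carrollian equations on an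
open set `V`, then with `ϖ = ½σβ² + σ^γ/(γ(γ−1))` and internal energy `e = σ^γ/γ`, the
third Carrollian equation `∂_t(βϖ) + ∂_x ϖ = −∂_t(βe)` holds pointwise on `V`
(powers of `σ` are real powers). -/
theorem isentropic_reduction
    (γ : ℝ) (hγ : 1 < γ) (V : Set (ℝ × ℝ)) (hV : IsOpen V)
    (σ β : ℝ → ℝ → ℝ)
    (hσ : ContDiffOn ℝ 1 (fun p : ℝ × ℝ => σ p.1 p.2) V)
    (hβ : ContDiffOn ℝ 1 (fun p : ℝ × ℝ => β p.1 p.2) V)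
    (hpos : ∀ t x : ℝ, (t, x) ∈ V → 0 < σ t x)
    (heq1 : ∀ t x : ℝ, (t, x) ∈ V →
      deriv (fun t' => β t' x * σ t' x) t + deriv (fun x' => σ t x') x = 0)
    (heq2 : ∀ t x : ℝ, (t, x) ∈ V →
      deriv (fun t' => (σ t' x) ^ γ / γ + (β t' x)^2 * σ t' x) t
          + deriv (fun x' => β t x' * σ t x') x = 0) :
    ∀ t x : ℝ, (t, x) ∈ V →
      deriv (fun t' => β t' x *
          ((1/2) * σ t' x * (β t' x)^2 + (σ t' x) ^ γ / (γ * (γ - 1)))) t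
        + deriv (fun x' =>
            (1/2) * σ t x' * (β t x')^2 + (σ t x') ^ γ / (γ * (γ - 1))) x
      = - deriv (fun t' => β t' x * ((σ t' x) ^ γ / γ)) t :=
  isentropic_reduction_general γ hγ V hV σ β hσ hβ heq1 heq2
end
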